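/- arXiv:2310.13145 — 3 statements merged into one kernel-verified Lean document; each statement's English description precedes it below -/
import Mathlib

section
/- Conversely, if a binary schedule u^on ∈ {0,1}^T (with induced u^su, u^sd) has the property that every maximal on-run that starts within the horizon has length at least T^U, then the minimum up-time constraints ∑_{i=t−T^U+1}^{t} u^su_i ≤ u^on_t hold for all t ∈ {T^U,...,T}. -/
/-!
Two start-ups `i < j` in a window of length `T^U` ending at `t` are impossible: the run started
at `i` lasts at least until `t`, so the unit is already on at `j - 1` and cannot start up at `j`.
Hence the window holds at most one start-up, and if it holds one, the run it starts covers `t`.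
-/

section

variable {T TU : ℕ} {uon usu : ℕ → ℤ}

lemma startup_eq_zero_or_eq_one (hbin_on : ∀ t, t ≤ T → uon t = 0 ∨ uon t = 1)
    (hsu : ∀ t, 1 ≤ t → t ≤ T → usu t = max 0 (uon t - uon (t - 1)))
    {j : ℕ} (hj : 1 ≤ j) (hjT : j ≤ T) : usu j = 0 ∨ usu j = 1 := by
  have := hbin_on j hjT
  have := hbin_on (j - 1) (by omega)
  rw [hsu j hj hjT]
  omega

lemma off_before_startup (hbin_on : ∀ t, t ≤ T → uon t = 0 ∨ uon t = 1)
    (hsu : ∀ t, 1 ≤ t → t ≤ T → usu t = max 0 (uon t - uon (t - 1)))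
    {j : ℕ} (hj : 1 ≤ j) (hjT : j ≤ T) (hsj : usu j = 1) : uon (j - 1) = 0 := by
  have := hbin_on j hjT
  have := hbin_on (j - 1) (by omega)
  rw [hsu j hj hjT] at hsj
  omega

lemma on_of_startup_mem_window
    (hruns : ∀ t, 1 ≤ t → t ≤ T → usu t = 1 →
      ∀ t', t ≤ t' → t' ≤ min (t + TU - 1) T → uon t' = 1)
    {t i : ℕ} (htT : t ≤ T) (hi : i ∈ Finset.Icc (t - TU + 1) t)
    (hsi : usu i = 1) : uon t = 1 := by
  rw [Finset.mem_Icc] at hi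
  exact hruns i (by omega) (by omega) hsi t (by omega) (by omega)

lemma not_lt_of_startups_mem_window (hbin_on : ∀ t, t ≤ T → uon t = 0 ∨ uon t = 1)
    (hsu : ∀ t, 1 ≤ t → t ≤ T → usu t = max 0 (uon t - uon (t - 1)))
    (hruns : ∀ t, 1 ≤ t → t ≤ T → usu t = 1 →
      ∀ t', t ≤ t' → t' ≤ min (t + TU - 1) T → uon t' = 1)
    {t i j : ℕ} (htT : t ≤ T)
    (hi : i ∈ Finset.Icc (t - TU + 1) t) (hj : j ∈ Finset.Icc (t - TU + 1) t)
    (hsi : usu i = 1) (hsj : usu j = 1) : ¬ i < j := by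
  intro hij
  rw [Finset.mem_Icc] at hi hj
  have h_on := hruns i (by omega) (by omega) hsi (j - 1) (by omega) (by omega)
  have h_off := off_before_startup hbin_on hsu (by omega) (by omega) hsj
  omega

lemma eq_of_startups_mem_window (hbin_on : ∀ t, t ≤ T → uon t = 0 ∨ uon t = 1)
    (hsu : ∀ t, 1 ≤ t → t ≤ T → usu t = max 0 (uon t - uon (t - 1)))
    (hruns : ∀ t, 1 ≤ t → t ≤ T → usu t = 1 →
      ∀ t', t ≤ t' → t' ≤ min (t + TU - 1) T → uon t' = 1)
    {t i j : ℕ} (htT : t ≤ T)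
    (hi : i ∈ Finset.Icc (t - TU + 1) t) (hj : j ∈ Finset.Icc (t - TU + 1) t)
    (hsi : usu i = 1) (hsj : usu j = 1) : i = j :=
  le_antisymm (not_lt.1 (not_lt_of_startups_mem_window hbin_on hsu hruns htT hj hi hsj hsi))
    (not_lt.1 (not_lt_of_startups_mem_window hbin_on hsu hruns htT hi hj hsi hsj))

end

theorem on_runs_imply_min_uptime_general
    (T TU : ℕ) (uon usu : ℕ → ℤ)
    (hbin_on : ∀ t, t ≤ T → uon t = 0 ∨ uon t = 1)
    (hsu : ∀ t, 1 ≤ t → t ≤ T → usu t = max 0 (uon t - uon (t - 1)))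
    (hruns : ∀ t, 1 ≤ t → t ≤ T → usu t = 1 →
      ∀ t', t ≤ t' → t' ≤ min (t + TU - 1) T → uon t' = 1) :
    ∀ t, TU ≤ t → t ≤ T →
      (∑ i ∈ Finset.Icc (t - TU + 1) t, usu i) ≤ uon t := by
  intro t _ htT
  have h_binary : ∀ j ∈ Finset.Icc (t - TU + 1) t, usu j = 0 ∨ usu j = 1 := fun j hj => by
    rw [Finset.mem_Icc] at hj
    exact startup_eq_zero_or_eq_one hbin_on hsu (by omega) (by omega)
  by_cases h_startup : ∃ i ∈ Finset.Icc (t - TU + 1) t, usu i = 1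
  · obtain ⟨i, hi, hsi⟩ := h_startup
    have h_others : ∀ j ∈ Finset.Icc (t - TU + 1) t, j ≠ i → usu j = 0 := fun j hj hji =>
      (h_binary j hj).resolve_right fun hsj =>
        hji (eq_of_startups_mem_window hbin_on hsu hruns htT hj hi hsj hsi)
    rw [Finset.sum_eq_single_of_mem i hi h_others, hsi,
      on_of_startup_mem_window hruns htT hi hsi]
  · push Not at h_startup
    rw [Finset.sum_eq_zero fun j hj => (h_binary j hj).resolve_right (h_startup j hj)]
    rcases hbin_on t htT with h | h <;> omega

/-- If every on-run starting within the horizon has length at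
least `T^U` (runs truncated by the horizon end being exempt only if they
extend to `T`), then the minimum up-time constraints hold. -/
theorem on_runs_imply_min_uptime
    (T TU : ℕ) (hTU : 1 ≤ TU) (uon usu : ℕ → ℤ)
    (hbin_on : ∀ t, t ≤ T → uon t = 0 ∨ uon t = 1)
    (hsu : ∀ t, 1 ≤ t → t ≤ T → usu t = max 0 (uon t - uon (t - 1)))
    (hruns : ∀ t, 1 ≤ t → t ≤ T → usu t = 1 →
      ∀ t', t ≤ t' → t' ≤ min (t + TU - 1) T → uon t' = 1) :
    ∀ t, TU ≤ t → t ≤ T →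
      (∑ i ∈ Finset.Icc (t - TU + 1) t, usu i) ≤ uon t :=
  on_runs_imply_min_uptime_general T TU uon usu hbin_on hsu hruns
end

section
/- Define the DP value function by backward recursion: c_{T+1,s} = 0 for s ∈ {0,1}, and for t ≤ T, c_{t,s} = min( L_t(s,s) + c_{t+1,s} , L_t(s,1−s) + ∑_{t'=t+1}^{min(t+T^min(1−s)−1,T)} L_{t'}(1−s,1−s) + c_{min(t+T^min(1−s),T+1), 1−s} ). Then c_{1,s₀} equals the minimum over all feasible schedules u ∈ {0,1}^T (satisfying transition, minimum up-time T^U and down-time T^D constraints, initial state s₀, and with any on/off run that begins within the horizon having length ≥ T^min) of ∑_{t=1}^T L_t(u_{t−1}, u_t), where u_0 = s₀ and T^min(1)=T^U, T^min(0)=T^D. -/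
/-!
The DP value `c t s` is the least cost of the periods `t, …, T` over schedules that are in
state `s` at time `t - 1` and respect the minimum run-lengths of switches made from time `t` on.
Such a schedule either keeps `s` at time `t`, leaving a problem of the same kind from `t + 1`,
or switches to `!s` and is then forced to stay there for the whole minimum run, which fixes
the cost of that run and leaves a problem of the same kind from the end of the run. Hence the
set of attainable tail costs is the union of two translates of later sets of the same kind, and
the recursion for `c` is the statement that least elements of such a union are computed by `min`.
-/

/-- A schedule `u : ℕ → Bool` (with `u 0` the initial state) is feasible for
minimum run-length requirements `Tmin : Bool → ℕ`: whenever it switches to a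
new state at time `t ∈ {1,…,T}`, it stays in that state for at least
`Tmin (u t)` periods or until the horizon ends. -/
def UCFeasible (T : ℕ) (Tmin : Bool → ℕ) (u : ℕ → Bool) : Prop :=
  ∀ t, 1 ≤ t → t ≤ T → u t ≠ u (t - 1) →
    ∀ t', t ≤ t' → t' ≤ min (t + Tmin (u t) - 1) T → u t' = u t

namespace UnitCommitment

open Finset

variable (T : ℕ) (Tmin : Bool → ℕ) (L : ℕ → Bool → Bool → ℝ)

def FeasibleFrom (t : ℕ) (u : ℕ → Bool) : Prop :=
  ∀ τ, t ≤ τ → τ ≤ T → u τ ≠ u (τ - 1) →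
    ∀ t', τ ≤ t' → t' ≤ min (τ + Tmin (u τ) - 1) T → u t' = u τ

def tailCost (t : ℕ) (u : ℕ → Bool) : ℝ :=
  ∑ τ ∈ Icc t T, L τ (u (τ - 1)) (u τ)

def tailCosts (t : ℕ) (s : Bool) : Set ℝ :=
  {C | ∃ u : ℕ → Bool, u (t - 1) = s ∧ FeasibleFrom T Tmin t u ∧ C = tailCost T L t u}

variable {T Tmin L}

section Feasibility

variable {t : ℕ} {u : ℕ → Bool}

theorem FeasibleFrom.mono {t' : ℕ} (h : FeasibleFrom T Tmin t u) (htt' : t ≤ t') :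
    FeasibleFrom T Tmin t' u :=
  fun τ hτ => h τ (htt'.trans hτ)

theorem FeasibleFrom.congr {v : ℕ → Bool} (h : FeasibleFrom T Tmin t u)
    (huv : ∀ τ, t - 1 ≤ τ → u τ = v τ) : FeasibleFrom T Tmin t v := by
  intro τ hτ hτT hne t' h₁ h₂
  rw [← huv τ (by omega)] at hne h₂ ⊢
  rw [← huv (τ - 1) (by omega)] at hne
  rw [← huv t' (by omega)]
  exact h τ hτ hτT hne t' h₁ h₂

theorem FeasibleFrom.of_succ (h : FeasibleFrom T Tmin (t + 1) u) (hu : u t = u (t - 1)) :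
    FeasibleFrom T Tmin t u := by
  intro τ hτ hτT hne
  rcases hτ.eq_or_lt with rfl | hτ
  · exact absurd hu hne
  · exact h τ hτ hτT hne

theorem FeasibleFrom.of_run (h : FeasibleFrom T Tmin (min (t + Tmin (u t) - 1) T + 1) u)
    (hrun : ∀ τ, t ≤ τ → τ ≤ min (t + Tmin (u t) - 1) T → u τ = u t) :
    FeasibleFrom T Tmin t u := by
  intro τ hτ hτT hne t' h₁ h₂
  by_cases hτm : τ ≤ min (t + Tmin (u t) - 1) T
  · obtain rfl : τ = t := by
      by_contra hτt
      exact hne ((hrun τ hτ hτm).trans (hrun (τ - 1) (by omega) (by omega)).symm)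
    exact hrun t' h₁ h₂
  · exact h τ (by omega) hτT hne t' h₁ h₂

end Feasibility

section Cost

variable {t : ℕ}

theorem tailCost_congr {u v : ℕ → Bool} (huv : ∀ τ, t - 1 ≤ τ → u τ = v τ) :
    tailCost T L t u = tailCost T L t v :=
  sum_congr rfl fun τ hτ => by
    rw [mem_Icc] at hτ
    rw [huv τ (by omega), huv (τ - 1) (by omega)]

theorem tailCost_of_lt (u : ℕ → Bool) (hTt : T < t) : tailCost T L t u = 0 := by
  rw [tailCost, Icc_eq_empty_of_lt hTt, sum_empty]

theorem tailCost_eq_sum_add {m : ℕ} (u : ℕ → Bool) (htm : t ≤ m + 1) (hmT : m ≤ T) :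
    tailCost T L t u = ∑ τ ∈ Icc t m, L τ (u (τ - 1)) (u τ) + tailCost T L (m + 1) u := by
  simp only [tailCost, ← Ico_add_one_right_eq_Icc]
  exact (sum_Ico_consecutive _ htm (by omega)).symm

theorem tailCost_eq_add_succ (u : ℕ → Bool) (htT : t ≤ T) :
    tailCost T L t u = L t (u (t - 1)) (u t) + tailCost T L (t + 1) u := by
  rw [tailCost_eq_sum_add u (m := t) (by omega) htT, Icc_self, sum_singleton]

theorem tailCost_eq_of_run {m : ℕ} {u : ℕ → Bool} {b : Bool} (htm : t ≤ m) (hmT : m ≤ T)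
    (hrun : ∀ τ, t ≤ τ → τ ≤ m → u τ = b) :
    tailCost T L t u =
      L t (u (t - 1)) b + ∑ τ ∈ Icc (t + 1) m, L τ b b + tailCost T L (m + 1) u := by
  rw [tailCost_eq_add_succ u (htm.trans hmT), hrun t le_rfl htm,
    tailCost_eq_sum_add u (by omega) hmT, add_assoc]
  congr 2
  refine sum_congr rfl fun τ hτ => ?_
  rw [mem_Icc] at hτ
  rw [hrun τ (by omega) hτ.2, hrun (τ - 1) (by omega) (by omega)]

end Cost

section Bellman

variable {t : ℕ} (s : Bool)

theorem tailCosts_horizon : tailCosts T Tmin L (T + 1) s = {0} := by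
  ext C
  constructor
  · rintro ⟨u, -, -, rfl⟩
    exact tailCost_of_lt u T.lt_succ_self
  · rintro rfl
    exact ⟨fun _ => s, rfl, fun τ _ hτT => absurd hτT (by omega),
      (tailCost_of_lt _ T.lt_succ_self).symm⟩

theorem image_stay_subset_tailCosts (ht : 1 ≤ t) (htT : t ≤ T) :
    (L t s s + ·) '' tailCosts T Tmin L (t + 1) s ⊆ tailCosts T Tmin L t s := by
  rintro _ ⟨_, ⟨u, hu, hfeas, rfl⟩, rfl⟩
  let v : ℕ → Bool := fun τ => if τ < t then s else u τ
  have hvu : ∀ τ, t + 1 - 1 ≤ τ → v τ = u τ := fun τ hτ => if_neg (by omega)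
  have hvt : v t = s := (hvu t (by omega)).trans (by simpa using hu)
  have hvs : v (t - 1) = s := if_pos (by omega)
  refine ⟨v, hvs, (hfeas.congr fun τ hτ => (hvu τ hτ).symm).of_succ (hvt.trans hvs.symm), ?_⟩
  rw [tailCost_eq_add_succ v htT, hvt, hvs, tailCost_congr hvu]

theorem image_switch_subset_tailCosts (ht : 1 ≤ t) (htT : t ≤ T) (hTmin : 1 ≤ Tmin (!s)) :
    (L t s (!s) + ∑ τ ∈ Icc (t + 1) (min (t + Tmin (!s) - 1) T), L τ (!s) (!s) + ·) ''
        tailCosts T Tmin L (min (t + Tmin (!s) - 1) T + 1) (!s) ⊆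
      tailCosts T Tmin L t s := by
  set m := min (t + Tmin (!s) - 1) T
  have htm : t ≤ m := by omega
  rintro _ ⟨_, ⟨u, hu, hfeas, rfl⟩, rfl⟩
  let v : ℕ → Bool := fun τ => if τ < t then s else if τ ≤ m then !s else u τ
  have hvs : v (t - 1) = s := if_pos (by omega)
  have hrun : ∀ τ, t ≤ τ → τ ≤ m → v τ = !s := fun τ h₁ h₂ => by
    simp only [v, if_neg (not_lt.mpr h₁), if_pos h₂]
  have hvt : v t = !s := hrun t le_rfl htm
  have hvu : ∀ τ, m + 1 - 1 ≤ τ → v τ = u τ := by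
    intro τ hτ
    rcases (show m ≤ τ by omega).eq_or_lt with rfl | hmτ
    · rw [hrun _ htm le_rfl, ← hu, Nat.add_sub_cancel]
    · simp only [v, if_neg (show ¬τ < t by omega), if_neg (not_le.mpr hmτ)]
  refine ⟨v, hvs, ?_, ?_⟩
  · refine FeasibleFrom.of_run ?_ (by rw [hvt]; exact hrun)
    rw [hvt]
    exact hfeas.congr fun τ hτ => (hvu τ hτ).symm
  · rw [tailCost_eq_of_run htm (min_le_right _ _) hrun, hvs, tailCost_congr hvu]

theorem tailCosts_subset_union (ht : 1 ≤ t) (htT : t ≤ T) (hTmin : 1 ≤ Tmin (!s)) :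
    tailCosts T Tmin L t s ⊆
      (L t s s + ·) '' tailCosts T Tmin L (t + 1) s ∪
      (L t s (!s) + ∑ τ ∈ Icc (t + 1) (min (t + Tmin (!s) - 1) T), L τ (!s) (!s) + ·) ''
        tailCosts T Tmin L (min (t + Tmin (!s) - 1) T + 1) (!s) := by
  set m := min (t + Tmin (!s) - 1) T
  rintro _ ⟨u, hu, hfeas, rfl⟩
  by_cases hut : u t = s
  · refine Or.inl ⟨tailCost T L (t + 1) u, ⟨u, by simpa using hut, hfeas.mono t.le_succ, rfl⟩, ?_⟩
    rw [tailCost_eq_add_succ u htT, hu, hut]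
  · have hut : u t = !s := Bool.eq_not_iff.mpr hut
    have hrun : ∀ τ, t ≤ τ → τ ≤ m → u τ = !s := fun τ h₁ h₂ =>
      (hfeas t le_rfl htT (by simp [hut, hu]) τ h₁ (by rwa [hut])).trans hut
    refine Or.inr ⟨tailCost T L (m + 1) u,
      ⟨u, by simpa using hrun m (by omega) le_rfl, hfeas.mono (by omega), rfl⟩, ?_⟩
    rw [tailCost_eq_of_run (by omega) (min_le_right _ _) hrun, hu]

theorem tailCosts_eq_union (ht : 1 ≤ t) (htT : t ≤ T) (hTmin : 1 ≤ Tmin (!s)) :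
    tailCosts T Tmin L t s =
      (L t s s + ·) '' tailCosts T Tmin L (t + 1) s ∪
      (L t s (!s) + ∑ τ ∈ Icc (t + 1) (min (t + Tmin (!s) - 1) T), L τ (!s) (!s) + ·) ''
        tailCosts T Tmin L (min (t + Tmin (!s) - 1) T + 1) (!s) :=
  (tailCosts_subset_union s ht htT hTmin).antisymm <| Set.union_subset
    (image_stay_subset_tailCosts s ht htT) (image_switch_subset_tailCosts s ht htT hTmin)

end Bellman

theorem isLeast_tailCosts (hTmin : ∀ b, 1 ≤ Tmin b) (c : ℕ → Bool → ℝ)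
    (hterm : ∀ s, c (T + 1) s = 0)
    (hrec : ∀ t s, 1 ≤ t → t ≤ T →
      c t s = min (L t s s + c (t + 1) s)
        (L t s (!s) +
          (∑ t' ∈ Icc (t + 1) (min (t + Tmin (!s) - 1) T), L t' (!s) (!s)) +
          c (min (t + Tmin (!s)) (T + 1)) (!s)))
    (t : ℕ) (s : Bool) (ht : 1 ≤ t) (htT : t ≤ T + 1) :
    IsLeast (tailCosts T Tmin L t s) (c t s) := by
  rcases htT.eq_or_lt with rfl | htT
  · rw [tailCosts_horizon, hterm]
    exact isLeast_singleton
  have hlen := hTmin (!s)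
  have hend : min (t + Tmin (!s)) (T + 1) = min (t + Tmin (!s) - 1) T + 1 := by omega
  rw [hrec t s ht (by omega), hend, tailCosts_eq_union s ht (by omega) hlen]
  exact ((monotone_id.const_add _).map_isLeast
      (isLeast_tailCosts hTmin c hterm hrec (t + 1) s (by omega) (by omega))).union
    ((monotone_id.const_add _).map_isLeast
      (isLeast_tailCosts hTmin c hterm hrec _ (!s) (by omega) (by omega)))
termination_by T + 1 - t

end UnitCommitment

theorem dp_value_is_min_cost_general
    (T : ℕ) (L : ℕ → Bool → Bool → ℝ)
    (TU TD : ℕ) (hTU : 1 ≤ TU) (hTD : 1 ≤ TD)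
    (Tmin : Bool → ℕ) (hTmin : Tmin true = TU ∧ Tmin false = TD)
    (s₀ : Bool) (c : ℕ → Bool → ℝ)
    (hterm : ∀ s, c (T + 1) s = 0)
    (hrec : ∀ t s, 1 ≤ t → t ≤ T →
      c t s = min (L t s s + c (t + 1) s)
        (L t s (!s) +
          (∑ t' ∈ Finset.Icc (t + 1) (min (t + Tmin (!s) - 1) T), L t' (!s) (!s)) +
          c (min (t + Tmin (!s)) (T + 1)) (!s))) :
    IsLeast
      {C : ℝ | ∃ u : ℕ → Bool, u 0 = s₀ ∧ UCFeasible T Tmin u ∧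
        C = ∑ t ∈ Finset.Icc 1 T, L t (u (t - 1)) (u t)}
      (c 1 s₀) := by
  have hTmin_pos : ∀ b, 1 ≤ Tmin b := by
    rintro (_ | _)
    · exact hTmin.2 ▸ hTD
    · exact hTmin.1 ▸ hTU
  exact UnitCommitment.isLeast_tailCosts hTmin_pos c hterm hrec 1 s₀ le_rfl (by omega)

/-- Correctness of the backward-induction DP: the value
`c 1 s₀` defined by the stated recursion equals the minimum cost
`∑_{t=1}^T L_t(u_{t−1}, u_t)` over all feasible schedules with `u_0 = s₀`. -/
theorem dp_value_is_min_cost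
    (T : ℕ) (hT : 1 ≤ T) (L : ℕ → Bool → Bool → ℝ)
    (TU TD : ℕ) (hTU : 1 ≤ TU) (hTD : 1 ≤ TD)
    (Tmin : Bool → ℕ) (hTmin : Tmin true = TU ∧ Tmin false = TD)
    (s₀ : Bool) (c : ℕ → Bool → ℝ)
    (hterm : ∀ s, c (T + 1) s = 0)
    (hrec : ∀ t s, 1 ≤ t → t ≤ T →
      c t s = min (L t s s + c (t + 1) s)
        (L t s (!s) +
          (∑ t' ∈ Finset.Icc (t + 1) (min (t + Tmin (!s) - 1) T), L t' (!s) (!s)) +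
          c (min (t + Tmin (!s)) (T + 1)) (!s))) :
    IsLeast
      {C : ℝ | ∃ u : ℕ → Bool, u 0 = s₀ ∧ UCFeasible T Tmin u ∧
        C = ∑ t ∈ Finset.Icc 1 T, L t (u (t - 1)) (u t)}
      (c 1 s₀) :=
  dp_value_is_min_cost_general T L TU TD hTU hTD Tmin hTmin s₀ c hterm hrec
end

section
/- If at every decision time t and state s the DP chooses the 'stay' branch when c^stay_{t,s} ≤ c^switch_{t,s} and otherwise the 'switch' branch, then the trajectory u_{1,s₀,1:T} returned by the DP is feasible (satisfies the minimum up/down-time run-length conditions) and achieves cost exactly c_{1,s₀}. -/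
open Finset

def dpTraj (u : ℕ → Bool → ℕ → Bool) (t : ℕ) (s : Bool) (x : ℕ) : Bool :=
  if x < t then s else u t s x

theorem dpTraj_of_lt {u : ℕ → Bool → ℕ → Bool} {t x : ℕ} (s : Bool) (hx : x < t) :
    dpTraj u t s x = s :=
  if_pos hx

def scheduleCost (L : ℕ → Bool → Bool → ℝ) (w : ℕ → Bool) (a b : ℕ) : ℝ :=
  ∑ x ∈ Icc a b, L x (w (x - 1)) (w x)

section Schedules

variable {T : ℕ} {Tmin : Bool → ℕ} {w w' : ℕ → Bool}

theorem UCFeasible.congr (h : UCFeasible T Tmin w) (hw : ∀ x ≤ T, w x = w' x) :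
    UCFeasible T Tmin w' := by
  intro t h1 h2 hne t' h3 h4
  rw [← hw t h2, ← hw (t - 1) (by omega)] at hne
  rw [← hw t h2] at h4 ⊢
  rw [← hw t' (h4.trans (min_le_right _ _))]
  exact h t h1 h2 hne t' h3 h4

theorem UCFeasible.const (s : Bool) : UCFeasible T Tmin fun _ => s :=
  fun _ _ _ hne => absurd rfl hne

theorem UCFeasible.prepend {t : ℕ} (s : Bool) (hw' : UCFeasible T Tmin w') (ht : 1 ≤ t)
    (hrun : ∀ x, t ≤ x → x ≤ min (t + Tmin (w' t) - 1) T → w' x = w' t) :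
    UCFeasible T Tmin fun x => if x < t then s else w' x := by
  intro t₁ h1 h2 hne t' h3 h4
  simp only at hne h4 ⊢
  rcases lt_trichotomy t₁ t with hlt | rfl | hgt
  · rw [if_pos hlt, if_pos (by omega)] at hne
    exact absurd rfl hne
  · rw [if_neg (lt_irrefl _)] at h4 ⊢
    rw [if_neg (by omega)]
    exact hrun t' h3 h4
  · rw [if_neg (by omega), if_neg (by omega)] at hne
    rw [if_neg (by omega)] at h4 ⊢
    rw [if_neg (by omega)]
    exact hw' t₁ h1 h2 hne t' h3 h4

end Schedules

section Cost

variable {L : ℕ → Bool → Bool → ℝ} {w w' : ℕ → Bool} {a b : ℕ}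

theorem scheduleCost_congr (hw : ∀ x, a - 1 ≤ x → x ≤ b → w x = w' x) :
    scheduleCost L w a b = scheduleCost L w' a b :=
  sum_congr rfl fun x hx => by
    rw [mem_Icc] at hx
    rw [hw x (by omega) hx.2, hw (x - 1) (by omega) (by omega)]

theorem scheduleCost_of_forall_eq {s : Bool} (hw : ∀ x, a - 1 ≤ x → x ≤ b → w x = s) :
    scheduleCost L w a b = ∑ x ∈ Icc a b, L x s s :=
  scheduleCost_congr (w' := fun _ => s) hw

theorem scheduleCost_self (t : ℕ) : scheduleCost L w t t = L t (w (t - 1)) (w t) := by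
  rw [scheduleCost, Icc_self, sum_singleton]

theorem scheduleCost_split {m : ℕ} (hm : 1 ≤ m) (ham : a ≤ m) (hmb : m ≤ b + 1) :
    scheduleCost L w a b = scheduleCost L w a (m - 1) + scheduleCost L w m b := by
  simp only [scheduleCost, ← Ico_add_one_right_eq_Icc, Nat.sub_add_cancel hm]
  exact (sum_Ico_consecutive _ ham hmb).symm

end Cost

structure IsDPTrajectory (T : ℕ) (Tmin : Bool → ℕ) (cstay cswitch : ℕ → Bool → ℝ)
    (u : ℕ → Bool → ℕ → Bool) : Prop where
  stay : ∀ t s, 1 ≤ t → t ≤ T → cstay t s ≤ cswitch t s →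
    ∀ t', t ≤ t' → t' ≤ T → u t s t' = if t' = t then s else u (t + 1) s t'
  switch : ∀ t s, 1 ≤ t → t ≤ T → cswitch t s < cstay t s →
    ∀ t', t ≤ t' → t' ≤ T →
      u t s t' = if t' ≤ min (t + Tmin (!s) - 1) T then !s
        else u (min (t + Tmin (!s)) (T + 1)) (!s) t'

structure IsDPValue (T : ℕ) (L : ℕ → Bool → Bool → ℝ) (Tmin : Bool → ℕ)
    (c cstay cswitch : ℕ → Bool → ℝ) : Prop where
  stay_eq : ∀ t s, cstay t s = L t s s + c (t + 1) s
  switch_eq : ∀ t s, cswitch t s =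
    L t s (!s) + (∑ t' ∈ Icc (t + 1) (min (t + Tmin (!s) - 1) T), L t' (!s) (!s)) +
      c (min (t + Tmin (!s)) (T + 1)) (!s)
  terminal : ∀ s, c (T + 1) s = 0
  bellman : ∀ t s, 1 ≤ t → t ≤ T → c t s = min (cstay t s) (cswitch t s)

namespace IsDPTrajectory

variable {T : ℕ} {L : ℕ → Bool → Bool → ℝ} {Tmin : Bool → ℕ} {c cstay cswitch : ℕ → Bool → ℝ}
  {u : ℕ → Bool → ℕ → Bool}

theorem dpTraj_eq_of_stay {t : ℕ} {s : Bool} (hu : IsDPTrajectory T Tmin cstay cswitch u)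
    (ht : 1 ≤ t) (htT : t ≤ T) (hc : cstay t s ≤ cswitch t s) (x : ℕ) (hx : x ≤ T) :
    dpTraj u t s x = dpTraj u (t + 1) s x := by
  unfold dpTraj
  by_cases hxt : x < t
  · rw [if_pos hxt, if_pos (by omega)]
  · rw [if_neg hxt, hu.stay t s ht htT hc x (by omega) hx]
    split_ifs <;> first | rfl | omega

theorem dpTraj_eq_of_switch {t : ℕ} {s : Bool} (hu : IsDPTrajectory T Tmin cstay cswitch u)
    (ht : 1 ≤ t) (htT : t ≤ T) (hc : cswitch t s < cstay t s) (x : ℕ) (hx : x ≤ T) :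
    dpTraj u t s x =
      if x < t then s else dpTraj u (min (t + Tmin (!s)) (T + 1)) (!s) x := by
  unfold dpTraj
  by_cases hxt : x < t
  · rw [if_pos hxt, if_pos hxt]
  · rw [if_neg hxt, if_neg hxt, hu.switch t s ht htT hc x (by omega) hx]
    split_ifs <;> first | rfl | omega

theorem feasible {t : ℕ} (hu : IsDPTrajectory T Tmin cstay cswitch u)
    (hTmin : ∀ b, 1 ≤ Tmin b) (s : Bool) (ht : 1 ≤ t) : UCFeasible T Tmin (dpTraj u t s) := by
  by_cases htT : t ≤ T
  · by_cases hc : cstay t s ≤ cswitch t s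
    · exact (hu.feasible hTmin (t := t + 1) s (by omega)).congr fun x hx =>
        (hu.dpTraj_eq_of_stay ht htT hc x hx).symm
    · set m := min (t + Tmin (!s)) (T + 1)
      have htm : t < m := by have := hTmin (!s); omega
      have hrun : ∀ x < m, dpTraj u m (!s) x = !s := fun x hx => dpTraj_of_lt _ hx
      refine ((hu.feasible hTmin (t := m) (!s) (by omega)).prepend s ht ?_).congr fun x hx =>
        (hu.dpTraj_eq_of_switch ht htT (not_le.mp hc) x hx).symm
      rw [hrun t htm]
      exact fun x _ hx => hrun x (by omega)
  · exact (UCFeasible.const s).congr fun x hx => (dpTraj_of_lt s (by omega)).symm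
termination_by T + 1 - t

theorem scheduleCost_eq {t : ℕ} (hu : IsDPTrajectory T Tmin cstay cswitch u)
    (hv : IsDPValue T L Tmin c cstay cswitch) (hTmin : ∀ b, 1 ≤ Tmin b) (s : Bool)
    (ht : 1 ≤ t) (htT : t ≤ T + 1) : scheduleCost L (dpTraj u t s) t T = c t s := by
  rcases htT.lt_or_eq with htT | rfl
  · replace htT : t ≤ T := by omega
    have hprev : dpTraj u t s (t - 1) = s := dpTraj_of_lt s (by omega)
    rw [scheduleCost_split (m := t + 1) (by omega) (by omega) (by omega), Nat.add_sub_cancel,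
      scheduleCost_self, hprev, hv.bellman t s ht htT]
    by_cases hc : cstay t s ≤ cswitch t s
    · have hagree := hu.dpTraj_eq_of_stay ht htT hc
      rw [min_eq_left hc, hv.stay_eq, hagree t htT, dpTraj_of_lt s (Nat.lt_succ_self t),
        scheduleCost_congr fun x _ hx => hagree x hx,
        hu.scheduleCost_eq hv hTmin (t := t + 1) s (by omega) (by omega)]
    · set m := min (t + Tmin (!s)) (T + 1)
      have htm : t < m := by have := hTmin (!s); omega
      have hagree := hu.dpTraj_eq_of_switch ht htT (not_le.mp hc)
      have hrun : ∀ x, t ≤ x → x < m → dpTraj u t s x = !s := fun x hxt hxm => by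
        rw [hagree x (by omega), if_neg (by omega)]
        exact dpTraj_of_lt _ hxm
      have hlast : min (t + Tmin (!s) - 1) T = m - 1 := by omega
      rw [min_eq_right (not_le.mp hc).le, hv.switch_eq, hlast, hrun t le_rfl htm,
        scheduleCost_split (m := m) (by omega) (by omega) (by omega),
        scheduleCost_of_forall_eq fun x hx hx' => hrun x (by omega) (by omega),
        scheduleCost_congr (w' := dpTraj u m (!s)) fun x hx hx' => by
          rw [hagree x hx', if_neg (by omega)],
        hu.scheduleCost_eq hv hTmin (t := m) (!s) (by omega) (by omega), add_assoc]
  · rw [scheduleCost, Icc_eq_empty (by omega), sum_empty, hv.terminal]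
termination_by T + 1 - t

end IsDPTrajectory

theorem dp_trajectory_feasible_and_optimal_general
    (T : ℕ) (L : ℕ → Bool → Bool → ℝ)
    (TU TD : ℕ) (hTU : 1 ≤ TU) (hTD : 1 ≤ TD)
    (Tmin : Bool → ℕ) (hTmin : Tmin true = TU ∧ Tmin false = TD)
    (s₀ : Bool) (c : ℕ → Bool → ℝ) (u : ℕ → Bool → ℕ → Bool)
    (cstay cswitch : ℕ → Bool → ℝ)
    (hcstay : ∀ t s, cstay t s = L t s s + c (t + 1) s)
    (hcswitch : ∀ t s, cswitch t s =
      L t s (!s) +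
        (∑ t' ∈ Finset.Icc (t + 1) (min (t + Tmin (!s) - 1) T), L t' (!s) (!s)) +
        c (min (t + Tmin (!s)) (T + 1)) (!s))
    (hterm : ∀ s, c (T + 1) s = 0)
    (hrec : ∀ t s, 1 ≤ t → t ≤ T → c t s = min (cstay t s) (cswitch t s))
    (hstay : ∀ t s, 1 ≤ t → t ≤ T → cstay t s ≤ cswitch t s →
      ∀ t', t ≤ t' → t' ≤ T →
        u t s t' = if t' = t then s else u (t + 1) s t')
    (hswitch : ∀ t s, 1 ≤ t → t ≤ T → cswitch t s < cstay t s →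
      ∀ t', t ≤ t' → t' ≤ T →
        u t s t' = if t' ≤ min (t + Tmin (!s) - 1) T then !s
          else u (min (t + Tmin (!s)) (T + 1)) (!s) t') :
    let w : ℕ → Bool := fun t => if t = 0 then s₀ else u 1 s₀ t
    UCFeasible T Tmin w ∧
      (∑ t ∈ Finset.Icc 1 T, L t (w (t - 1)) (w t)) = c 1 s₀ := by
  intro w
  have hTmin1 : ∀ b, 1 ≤ Tmin b := by
    rintro (_ | _)
    · exact hTmin.2 ▸ hTD
    · exact hTmin.1 ▸ hTU
  have hu : IsDPTrajectory T Tmin cstay cswitch u := ⟨hstay, hswitch⟩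
  have hv : IsDPValue T L Tmin c cstay cswitch := ⟨hcstay, hcswitch, hterm, hrec⟩
  have hw : w = dpTraj u 1 s₀ := funext fun x => by simp [w, dpTraj]
  rw [hw]
  exact ⟨hu.feasible hTmin1 s₀ le_rfl, hu.scheduleCost_eq hv hTmin1 s₀ le_rfl (by omega)⟩

/-- If the DP chooses the 'stay' branch when
`c^stay_{t,s} ≤ c^switch_{t,s}` and the 'switch' branch otherwise, then the
returned trajectory `u_{1,s₀,1:T}` is feasible and its cost is exactly
`c 1 s₀`. -/
theorem dp_trajectory_feasible_and_optimal
    (T : ℕ) (hT : 1 ≤ T) (L : ℕ → Bool → Bool → ℝ)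
    (TU TD : ℕ) (hTU : 1 ≤ TU) (hTD : 1 ≤ TD)
    (Tmin : Bool → ℕ) (hTmin : Tmin true = TU ∧ Tmin false = TD)
    (s₀ : Bool) (c : ℕ → Bool → ℝ) (u : ℕ → Bool → ℕ → Bool)
    (cstay cswitch : ℕ → Bool → ℝ)
    (hcstay : ∀ t s, cstay t s = L t s s + c (t + 1) s)
    (hcswitch : ∀ t s, cswitch t s =
      L t s (!s) +
        (∑ t' ∈ Finset.Icc (t + 1) (min (t + Tmin (!s) - 1) T), L t' (!s) (!s)) +
        c (min (t + Tmin (!s)) (T + 1)) (!s))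
    (hterm : ∀ s, c (T + 1) s = 0)
    (hrec : ∀ t s, 1 ≤ t → t ≤ T → c t s = min (cstay t s) (cswitch t s))
    (hstay : ∀ t s, 1 ≤ t → t ≤ T → cstay t s ≤ cswitch t s →
      ∀ t', t ≤ t' → t' ≤ T →
        u t s t' = if t' = t then s else u (t + 1) s t')
    (hswitch : ∀ t s, 1 ≤ t → t ≤ T → cswitch t s < cstay t s →
      ∀ t', t ≤ t' → t' ≤ T →
        u t s t' = if t' ≤ min (t + Tmin (!s) - 1) T then !s
          else u (min (t + Tmin (!s)) (T + 1)) (!s) t') :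
    let w : ℕ → Bool := fun t => if t = 0 then s₀ else u 1 s₀ t
    UCFeasible T Tmin w ∧
      (∑ t ∈ Finset.Icc 1 T, L t (w (t - 1)) (w t)) = c 1 s₀ :=
  dp_trajectory_feasible_and_optimal_general T L TU TD hTU hTD Tmin hTmin s₀ c u cstay cswitch
    hcstay hcswitch hterm hrec hstay hswitch
end
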